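/- Let G = (X, E, δ, X₀) be an NFA with observable events E_o, secret states X_S, observer G_obs, secret-involved projected automaton G_SP, and verifier G_v constructed from G_obs and G_SP. Then G is infinite-step strong opaque if and only if every verifier state x_v = (x_v¹, x_v²) ∈ X_v satisfies x_v² ≠ ∅. -/

import Mathlib

namespace Opacity

variable {X E : Type*}

/-- Extension of a nondeterministic transition function `δ : X × E → Set X`
to strings: `dStr δ x ε = {x}` and `dStr δ x (e·s) = ⋃ x' ∈ δ x e, dStr δ x' s`. -/
def dStr (δ : X → E → Set X) : X → List E → Set X
  | x, [] => {x}
  | x, e :: s => ⋃ x' ∈ δ x e, dStr δ x' s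

/-- Extension of the transition function to sets of states. -/
def dSet (δ : X → E → Set X) (Q : Set X) (s : List E) : Set X :=
  ⋃ x ∈ Q, dStr δ x s

/-- The natural projection `P : E* → E_o*`, deleting all unobservable events. -/
noncomputable def proj (Eo : Set E) : List E → List E
  | [] => []
  | e :: s => @ite _ (e ∈ Eo) (Classical.propDecidable _) (e :: proj Eo s) (proj Eo s)

/-- Unobservable reach `UR(Q)`. -/
def UR (δ : X → E → Set X) (Eo : Set E) (Q : Set X) : Set X :=
  {x' | ∃ x ∈ Q, ∃ s : List E, x' ∈ dStr δ x s ∧ proj Eo s = []}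

/-- Observable reach `R(Q, e_o)` via one observable event. -/
def oR (δ : X → E → Set X) (Eo : Set E) (Q : Set X) (eo : E) : Set X :=
  {x | ∃ x' ∈ Q, ∃ s : List E, x ∈ dStr δ x' s ∧ proj Eo s = [eo]}

/-- The observer's transition function `f_obs(q, e_o) = R(q, e_o)`, extended to
observation sequences.  It is totalized: since `R(∅, e_o) = ∅`, the partial
function `f_obs` is defined on `(q, w)` exactly when `fobs δ Eo q w` is nonempty. -/
def fobs (δ : X → E → Set X) (Eo : Set E) : Set X → List E → Set X
  | q, [] => q
  | q, e :: w => fobs δ Eo (oR δ Eo q e) w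

/-- The state set `X_obs` of the observer: the (nonempty) subsets of `X`
reachable from the initial observer state `UR(X₀)`. -/
def Xobs (δ : X → E → Set X) (Eo : Set E) (X0 : Set X) : Set (Set X) :=
  {q | ∃ w : List E, fobs δ Eo (UR δ Eo X0) w = q ∧ q.Nonempty}

/-- `y` is a run of the automaton from `x` over the string `s`:
`y 0 = x` and `y (j+1) ∈ δ (y j) (s[j])` for all `j < |s|`. -/
def IsRun (δ : X → E → Set X) (x : X) (s : List E) (y : ℕ → X) : Prop :=
  y 0 = x ∧ ∀ j : Fin s.length, y (j.val + 1) ∈ δ (y j.val) (s.get j)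

/-- There is a non-secret run of the automaton from `x` to `x'` over `s`
(all states of the run except possibly the first one are non-secret). -/
def NonSecretRunTo (δ : X → E → Set X) (XS : Set X) (x : X) (s : List E) (x' : X) : Prop :=
  ∃ y : ℕ → X, IsRun δ x s y ∧ (∀ j, 1 ≤ j → j ≤ s.length → y j ∉ XS) ∧ y s.length = x'

/-- `K`-step weak opacity. -/
def KStepWeakOpaque (δ : X → E → Set X) (Eo : Set E) (X0 XS : Set X) (K : ℕ) : Prop :=
  ∀ x0 ∈ X0, ∀ s t : List E,
    (dStr δ x0 (s ++ t)).Nonempty →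
    (dStr δ x0 s ∩ XS).Nonempty →
    (dSet δ (dStr δ x0 s ∩ XS) t).Nonempty →
    (proj Eo t).length ≤ K →
    ∃ x0' ∈ X0, ∃ s' t' : List E,
      (dStr δ x0' (s' ++ t')).Nonempty ∧
      proj Eo s' = proj Eo s ∧ proj Eo t' = proj Eo t ∧
      (dStr δ x0' s' ∩ XSᶜ).Nonempty ∧
      (dSet δ (dStr δ x0' s' ∩ XSᶜ) t').Nonempty

/-- Infinite-step weak opacity. -/
def InfStepWeakOpaque (δ : X → E → Set X) (Eo : Set E) (X0 XS : Set X) : Prop :=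
  ∀ x0 ∈ X0, ∀ s t : List E,
    (dStr δ x0 (s ++ t)).Nonempty →
    (dStr δ x0 s ∩ XS).Nonempty →
    (dSet δ (dStr δ x0 s ∩ XS) t).Nonempty →
    ∃ x0' ∈ X0, ∃ s' t' : List E,
      (dStr δ x0' (s' ++ t')).Nonempty ∧
      proj Eo s' = proj Eo s ∧ proj Eo t' = proj Eo t ∧
      (dStr δ x0' s' ∩ XSᶜ).Nonempty ∧
      (dSet δ (dStr δ x0' s' ∩ XSᶜ) t').Nonempty

/-- `K`-step strong opacity. -/
def KStepStrongOpaque (δ : X → E → Set X) (Eo : Set E) (X0 XS : Set X) (K : ℕ) : Prop :=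
  ∀ x0 ∈ X0, ∀ s t : List E,
    (dStr δ x0 (s ++ t)).Nonempty →
    (dStr δ x0 s ∩ XS).Nonempty →
    (dSet δ (dStr δ x0 s ∩ XS) t).Nonempty →
    (proj Eo t).length ≤ K →
    ∃ x0' ∈ X0, ∃ ω : List E,
      (dStr δ x0' ω).Nonempty ∧
      proj Eo ω = proj Eo (s ++ t) ∧
      ∃ y : ℕ → X, IsRun δ x0' ω y ∧
        ∀ j ≤ ω.length,
          (proj Eo ω).length - (proj Eo (ω.take j)).length ≤ K → y j ∉ XS

/-- Infinite-step strong opacity. -/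
def InfStepStrongOpaque (δ : X → E → Set X) (Eo : Set E) (X0 XS : Set X) : Prop :=
  ∀ x0 ∈ X0, ∀ s t : List E,
    (dStr δ x0 (s ++ t)).Nonempty →
    (dStr δ x0 s ∩ XS).Nonempty →
    (dSet δ (dStr δ x0 s ∩ XS) t).Nonempty →
    ∃ x0' ∈ X0 ∩ XSᶜ, ∃ ω : List E,
      (dStr δ x0' ω).Nonempty ∧
      proj Eo ω = proj Eo (s ++ t) ∧
      ∃ y : ℕ → X, IsRun δ x0' ω y ∧ ∀ j ≤ ω.length, y j ∉ XS

/-- Child of a node `(x₁, x₂)` of a state-tree associated with observer state `q'`,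
via observable event `e`. -/
def treeChild (δ : X → E → Set X) (Eo : Set E) (q' : Set X) (n : Set X × Set X)
    (e : E) : Set X × Set X :=
  ({x ∈ oR δ Eo q' e | ∃ x' ∈ n.1, x ∈ oR δ Eo {x'} e},
   {x ∈ oR δ Eo q' e | ∃ x' ∈ n.2, x ∈ oR δ Eo {x'} e})

/-- Descend in a state-tree from node `n` (associated with observer state `q'`)
along the observation sequence `w`. -/
def treeNodeAux (δ : X → E → Set X) (Eo : Set E) :
    Set X → Set X × Set X → List E → Set X × Set X
  | _, n, [] => n
  | q', n, e :: w => treeNodeAux δ Eo (oR δ Eo q' e) (treeChild δ Eo q' n e) w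

/-- The node of the state-tree rooted at observer state `q` reached from the
root `(q ∩ X_S, q ∩ X_NS)` along the observation sequence `w`. -/
def treeNode (δ : X → E → Set X) (Eo : Set E) (XS : Set X) (q : Set X)
    (w : List E) : Set X × Set X :=
  treeNodeAux δ Eo q (q ∩ XS, q ∩ XSᶜ) w

/-- `X_st`: all nodes of the depth-`K` state-trees rooted at observer states
intersecting the secret states. -/
def Xst (δ : X → E → Set X) (Eo : Set E) (X0 XS : Set X) (K : ℕ) :
    Set (Set X × Set X) :=
  {n | ∃ q ∈ Xobs δ Eo X0, (q ∩ XS).Nonempty ∧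
    ∃ w : List E, w.length ≤ K ∧ (fobs δ Eo q w).Nonempty ∧ treeNode δ Eo XS q w = n}

/-- Initial states of the secret-involved projected automaton.  A state of
`G_SP` is a pair `(x, b)` where `b = false` encodes the tag `N` and `b = true`
encodes the tag `Y`. -/
def SPinit (δ : X → E → Set X) (Eo : Set E) (X0 XS : Set X) : Set (X × Bool) :=
  {p | p.1 ∈ UR δ Eo X0 ∧
    (p.2 = false ↔
      ∃ x0 ∈ X0 ∩ XSᶜ, ∃ s : List E, proj Eo s = [] ∧ NonSecretRunTo δ XS x0 s p.1)}

/-- Transition relation of the secret-involved projected automaton. -/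
def SPtrans (δ : X → E → Set X) (Eo : Set E) (XS : Set X) (p : X × Bool) (e : E) :
    Set (X × Bool) :=
  {p' | p'.1 ∈ oR δ Eo {p.1} e ∧
    ((p.1 ∉ XS ∧
        (p'.2 = false ↔ ∃ s : List E, proj Eo s = [e] ∧ NonSecretRunTo δ XS p.1 s p'.1)) ∨
     (p.1 ∈ XS ∧ p.2 = true ∧ p'.2 = true))}

/-- `X_SP`: states of the secret-involved projected automaton reachable from
its initial states. -/
def XSP (δ : X → E → Set X) (Eo : Set E) (X0 XS : Set X) : Set (X × Bool) :=
  {p | ∃ p0 ∈ SPinit δ Eo X0 XS, ∃ w : List E, p ∈ dStr (SPtrans δ Eo XS) p0 w}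

/-- Child of a node `(x₁, x₂)` of a secret-unvisited state-tree associated with
observer state `q'`, via observable event `e`. -/
def sstChild (δ : X → E → Set X) (Eo : Set E) (XS : Set X) (q' : Set X)
    (n : Set X × Set X) (e : E) : Set X × Set X :=
  (oR δ Eo q' e,
   {x ∈ oR δ Eo q' e | ∃ x' ∈ n.2,
      x ∈ oR δ Eo {x'} e ∧ (x, false) ∈ SPtrans δ Eo XS (x', false) e})

/-- Descend in a secret-unvisited state-tree from node `n` (associated with
observer state `q'`) along the observation sequence `w`. -/
def sstNodeAux (δ : X → E → Set X) (Eo : Set E) (XS : Set X) :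
    Set X → Set X × Set X → List E → Set X × Set X
  | _, n, [] => n
  | q', n, e :: w => sstNodeAux δ Eo XS (oR δ Eo q' e) (sstChild δ Eo XS q' n e) w

/-- The node of the secret-unvisited state-tree (SST) rooted at observer state
`q` reached from the root `(q, {x ∈ q ∩ X_NS : x_N ∈ X_SP})` along the
observation sequence `w`. -/
def sstNode (δ : X → E → Set X) (Eo : Set E) (X0 XS : Set X) (q : Set X)
    (w : List E) : Set X × Set X :=
  sstNodeAux δ Eo XS q
    (q, {x | x ∈ q ∧ x ∉ XS ∧ (x, false) ∈ XSP δ Eo X0 XS}) w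

/-- `X_st^G`: all nodes of the depth-`K` SSTs rooted at observer states
intersecting the secret states. -/
def XstSST (δ : X → E → Set X) (Eo : Set E) (X0 XS : Set X) (K : ℕ) :
    Set (Set X × Set X) :=
  {n | ∃ q ∈ Xobs δ Eo X0, (q ∩ XS).Nonempty ∧
    ∃ w : List E, w.length ≤ K ∧ (fobs δ Eo q w).Nonempty ∧ sstNode δ Eo X0 XS q w = n}

/-- Initial state of the verifier. -/
def vInit (δ : X → E → Set X) (Eo : Set E) (X0 XS : Set X) : Set X × Set X :=
  (UR δ Eo X0, {x ∈ UR δ Eo X0 | (x, false) ∈ SPinit δ Eo X0 XS})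

/-- Transition function of the verifier, extended to observation sequences
(totalized: the verifier step is defined exactly when the corresponding
observer step is, i.e. exactly when the first component stays nonempty). -/
def fv (δ : X → E → Set X) (Eo : Set E) (XS : Set X) :
    Set X × Set X → List E → Set X × Set X
  | v, [] => v
  | v, e :: w => fv δ Eo XS
      (oR δ Eo v.1 e,
       {x' ∈ oR δ Eo v.1 e | ∃ x ∈ v.2, (x', false) ∈ SPtrans δ Eo XS (x, false) e}) w

/-- `X_v`: the verifier states reachable from the initial verifier state. -/
def Xv (δ : X → E → Set X) (Eo : Set E) (X0 XS : Set X) : Set (Set X × Set X) :=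
  {v | ∃ w : List E, fv δ Eo XS (vInit δ Eo X0 XS) w = v ∧ v.1.Nonempty}

end Opacity

open Opacity

/-!
After the observation `w`, the verifier is in the state whose first component is the set of
states reachable by a string of `G` observed as `w`, and whose second component is the set of
endpoints of such strings with an entirely non-secret run, i.e. the same set computed in the
automaton `avoid δ XS` started from `X₀ ∩ X_NS`. So all second components are nonempty iff every
observation of `G` is the observation of a non-secret run. This is infinite-step strong opacity:
a run of `G` that visits a secret state splits as `s t` with the visit at the end of `s`, and
opacity then supplies a non-secret run with the same observation.
-/

namespace Opacity

variable {X E : Type*}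

def avoid (δ : X → E → Set X) (S : Set X) : X → E → Set X :=
  fun x e => δ x e \ S

def obsReach (δ : X → E → Set X) (Eo : Set E) (Q : Set X) (w : List E) : Set X :=
  {x' | ∃ x ∈ Q, ∃ ω : List E, proj Eo ω = w ∧ x' ∈ dStr δ x ω}

section Strings

variable {Eo : Set E}

theorem proj_append (s t : List E) : proj Eo (s ++ t) = proj Eo s ++ proj Eo t := by
  induction s with
  | nil => rfl
  | cons e s ih =>
    simp only [List.cons_append, proj]
    split <;> simp [ih]

theorem proj_cons_of_mem {e : E} (he : e ∈ Eo) (s : List E) :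
    proj Eo (e :: s) = e :: proj Eo s := by
  simp [proj, he]

theorem proj_cons_of_notMem {e : E} (he : e ∉ Eo) (s : List E) :
    proj Eo (e :: s) = proj Eo s := by
  simp [proj, he]

theorem exists_append_of_proj_eq_append {ω u v : List E} (h : proj Eo ω = u ++ v) :
    ∃ s t : List E, ω = s ++ t ∧ proj Eo s = u ∧ proj Eo t = v := by
  induction ω generalizing u with
  | nil =>
    obtain ⟨rfl, rfl⟩ := List.append_eq_nil_iff.mp h.symm
    exact ⟨[], [], rfl, rfl, rfl⟩
  | cons e ω ih =>
    by_cases he : e ∈ Eo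
    · rw [proj_cons_of_mem he] at h
      cases u with
      | nil => exact ⟨[], e :: ω, rfl, rfl, by rw [proj_cons_of_mem he]; exact h⟩
      | cons a u =>
        rw [List.cons_append, List.cons.injEq] at h
        obtain ⟨rfl, h⟩ := h
        obtain ⟨s, t, rfl, hs, ht⟩ := ih h
        exact ⟨e :: s, t, rfl, by rw [proj_cons_of_mem he, hs], ht⟩
    · rw [proj_cons_of_notMem he] at h
      obtain ⟨s, t, rfl, hs, ht⟩ := ih h
      exact ⟨e :: s, t, rfl, by rw [proj_cons_of_notMem he, hs], ht⟩

end Strings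

section Runs

variable {δ δ' : X → E → Set X} {S : Set X} {x x' : X}

theorem mem_dStr_cons {e : E} {s : List E} :
    x' ∈ dStr δ x (e :: s) ↔ ∃ m ∈ δ x e, x' ∈ dStr δ m s := by
  simp only [dStr, Set.mem_iUnion, exists_prop]

theorem mem_dStr_append {s t : List E} :
    x' ∈ dStr δ x (s ++ t) ↔ ∃ m ∈ dStr δ x s, x' ∈ dStr δ m t := by
  induction s generalizing x with
  | nil => simp [dStr]
  | cons e s ih => simp only [List.cons_append, mem_dStr_cons, ih]; aesop

theorem dStr_mono (h : ∀ x e, δ x e ⊆ δ' x e) (x : X) (s : List E) :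
    dStr δ x s ⊆ dStr δ' x s := by
  induction s generalizing x with
  | nil => exact subset_rfl
  | cons e s ih => exact Set.biUnion_mono (h x e) fun m _ => ih m

theorem avoid_subset (x : X) (e : E) : avoid δ S x e ⊆ δ x e :=
  Set.sdiff_subset

theorem dStr_avoid_subset_compl (hx : x ∉ S) (s : List E) : dStr (avoid δ S) x s ⊆ Sᶜ := by
  induction s generalizing x with
  | nil => simpa [dStr] using hx
  | cons e s ih =>
    simp only [dStr, Set.iUnion_subset_iff]
    exact fun m hm => ih hm.2

theorem mem_dStr_avoid_or_exists_visit {ω : List E} (h : x' ∈ dStr δ x ω) :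
    (x ∉ S ∧ x' ∈ dStr (avoid δ S) x ω) ∨
      ∃ s t : List E, ω = s ++ t ∧ ∃ m ∈ dStr δ x s ∩ S, x' ∈ dStr δ m t := by
  by_cases hx : x ∈ S
  · exact Or.inr ⟨[], ω, rfl, x, ⟨rfl, hx⟩, h⟩
  induction ω generalizing x with
  | nil => exact Or.inl ⟨hx, h⟩
  | cons e u ih =>
    obtain ⟨m, hm, hx'⟩ := mem_dStr_cons.mp h
    by_cases hmS : m ∈ S
    · exact Or.inr ⟨[e], u, rfl, m, ⟨mem_dStr_cons.mpr ⟨m, hm, rfl⟩, hmS⟩, hx'⟩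
    rcases ih hx' hmS with ⟨-, hx'⟩ | ⟨s, t, rfl, n, ⟨hn, hnS⟩, hx'⟩
    · exact Or.inl ⟨hx, mem_dStr_cons.mpr ⟨m, ⟨hm, hmS⟩, hx'⟩⟩
    · exact Or.inr ⟨e :: s, t, rfl, n, ⟨mem_dStr_cons.mpr ⟨m, hm, hn⟩, hnS⟩, hx'⟩

theorem mem_dStr_iff_exists_isRun {ω : List E} :
    x' ∈ dStr δ x ω ↔ ∃ y : ℕ → X, IsRun δ x ω y ∧ y ω.length = x' := by
  induction ω generalizing x with
  | nil =>
    simp only [dStr, Set.mem_singleton_iff, IsRun, List.length_nil, IsEmpty.forall_iff, and_true]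
    exact ⟨fun h => ⟨fun _ => x, rfl, h.symm⟩, fun ⟨y, h0, h⟩ => h ▸ h0⟩
  | cons e s ih =>
    simp only [mem_dStr_cons, ih]
    constructor
    · rintro ⟨m, hm, z, ⟨hz0, hz⟩, hzend⟩
      refine ⟨Nat.rec x fun k _ => z k, ⟨rfl, ?_⟩, hzend⟩
      rintro ⟨_ | k, hk⟩
      · simpa [hz0] using hm
      · exact hz ⟨k, by simpa using hk⟩
    · rintro ⟨y, ⟨hy0, hy⟩, hyend⟩
      refine ⟨y 1, by simpa [hy0] using hy ⟨0, by simp⟩, fun k => y (k + 1), ⟨rfl, ?_⟩, hyend⟩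
      rintro ⟨k, hk⟩
      simpa using hy ⟨k + 1, by simpa using hk⟩

theorem isRun_avoid_iff {ω : List E} {y : ℕ → X} :
    IsRun (avoid δ S) x ω y ↔ IsRun δ x ω y ∧ ∀ j, 1 ≤ j → j ≤ ω.length → y j ∉ S := by
  simp only [IsRun, avoid, Set.mem_sdiff]
  constructor
  · rintro ⟨h0, h⟩
    refine ⟨⟨h0, fun j => (h j).1⟩, fun j hj1 hj => ?_⟩
    obtain ⟨k, rfl⟩ := Nat.exists_eq_add_of_le' hj1
    exact (h ⟨k, hj⟩).2
  · rintro ⟨⟨h0, h⟩, hS⟩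
    exact ⟨h0, fun j => ⟨h j, hS _ (by omega) j.isLt⟩⟩

theorem nonSecretRunTo_iff {ω : List E} :
    NonSecretRunTo δ S x ω x' ↔ x' ∈ dStr (avoid δ S) x ω := by
  simp only [NonSecretRunTo, mem_dStr_iff_exists_isRun, isRun_avoid_iff, and_assoc]

theorem exists_isRun_forall_notMem_iff {ω : List E} :
    (∃ y : ℕ → X, IsRun δ x ω y ∧ ∀ j ≤ ω.length, y j ∉ S) ↔
      x ∉ S ∧ (dStr (avoid δ S) x ω).Nonempty := by
  simp only [Set.Nonempty, mem_dStr_iff_exists_isRun, isRun_avoid_iff]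
  constructor
  · rintro ⟨y, hy, hS⟩
    exact ⟨hy.1 ▸ hS 0 (Nat.zero_le _), _, y, ⟨hy, fun j _ => hS j⟩, rfl⟩
  · rintro ⟨hx, -, y, ⟨hy, hS⟩, -⟩
    refine ⟨y, hy, fun j hj => ?_⟩
    rcases Nat.eq_zero_or_pos j with rfl | hj0
    · exact hy.1 ▸ hx
    · exact hS j hj0 hj

end Runs

section ObservationReach

variable {δ δ' : X → E → Set X} {Eo : Set E} {Q Q' : Set X}

theorem UR_eq_obsReach_nil : UR δ Eo Q = obsReach δ Eo Q [] := by
  ext; simp only [UR, obsReach, Set.mem_ofPred_eq]; aesop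

theorem oR_eq_obsReach_singleton (e : E) : oR δ Eo Q e = obsReach δ Eo Q [e] := by
  ext; simp only [oR, obsReach, Set.mem_ofPred_eq]; aesop

theorem obsReach_obsReach (u v : List E) :
    obsReach δ Eo (obsReach δ Eo Q u) v = obsReach δ Eo Q (u ++ v) := by
  ext x'
  constructor
  · rintro ⟨m, ⟨x, hx, s, rfl, hm⟩, t, rfl, hx'⟩
    exact ⟨x, hx, s ++ t, proj_append s t, mem_dStr_append.mpr ⟨m, hm, hx'⟩⟩
  · rintro ⟨x, hx, ω, hω, hx'⟩
    obtain ⟨s, t, rfl, rfl, rfl⟩ := exists_append_of_proj_eq_append hω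
    obtain ⟨m, hm, hx'⟩ := mem_dStr_append.mp hx'
    exact ⟨m, ⟨x, hx, s, rfl, hm⟩, t, rfl, hx'⟩

theorem obsReach_mono (hδ : ∀ x e, δ x e ⊆ δ' x e) (hQ : Q ⊆ Q') (w : List E) :
    obsReach δ Eo Q w ⊆ obsReach δ' Eo Q' w :=
  fun _ ⟨x, hx, ω, hω, hx'⟩ => ⟨x, hQ hx, ω, hω, dStr_mono hδ x ω hx'⟩

theorem obsReach_avoid_subset {S : Set X} (w : List E) :
    obsReach (avoid δ S) Eo (Q ∩ Sᶜ) w ⊆ obsReach δ Eo Q w :=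
  obsReach_mono avoid_subset Set.inter_subset_left w

theorem obsReach_avoid_subset_compl {S : Set X} (w : List E) :
    obsReach (avoid δ S) Eo (Q ∩ Sᶜ) w ⊆ Sᶜ :=
  fun _ ⟨_, hx, _, _, hx'⟩ => dStr_avoid_subset_compl hx.2 _ hx'

end ObservationReach

section Verifier

variable {δ : X → E → Set X} {Eo : Set E} {X0 XS : Set X}

theorem mem_SPtrans_false_iff {x x' : X} {e : E} :
    (x', false) ∈ SPtrans δ Eo XS (x, false) e ↔
      x ∉ XS ∧ x' ∈ oR (avoid δ XS) Eo {x} e := by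
  have hsub : oR (avoid δ XS) Eo {x} e ⊆ oR δ Eo {x} e := by
    simpa only [oR_eq_obsReach_singleton] using obsReach_mono (Eo := Eo) avoid_subset subset_rfl [e]
  have hNS : (∃ s : List E, proj Eo s = [e] ∧ NonSecretRunTo δ XS x s x') ↔
      x' ∈ oR (avoid δ XS) Eo {x} e := by
    simp only [nonSecretRunTo_iff, oR, Set.mem_ofPred_eq, Set.mem_singleton_iff, exists_eq_left]
    aesop
  simp only [SPtrans, Set.mem_ofPred_eq, hNS, true_iff, Bool.false_eq_true, false_and, and_false,
    or_false]
  exact ⟨fun ⟨_, h⟩ => h, fun h => ⟨hsub h.2, h⟩⟩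

theorem vInit_eq :
    vInit δ Eo X0 XS = (obsReach δ Eo X0 [], obsReach (avoid δ XS) Eo (X0 ∩ XSᶜ) []) := by
  have hinit : ∀ x, (x, false) ∈ SPinit δ Eo X0 XS ↔
      x ∈ UR δ Eo X0 ∧ x ∈ UR (avoid δ XS) Eo (X0 ∩ XSᶜ) := by
    intro x
    simp only [SPinit, UR, Set.mem_ofPred_eq, nonSecretRunTo_iff, true_iff]
    aesop
  simp only [vInit, hinit, UR_eq_obsReach_nil, Prod.mk.injEq, true_and]
  ext x
  exact ⟨fun h => h.2.2, fun h => ⟨obsReach_avoid_subset [] h, obsReach_avoid_subset [] h, h⟩⟩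

theorem verifier_snd_step (w : List E) (e : E) :
    {x' ∈ oR δ Eo (obsReach δ Eo X0 w) e |
      ∃ x ∈ obsReach (avoid δ XS) Eo (X0 ∩ XSᶜ) w, (x', false) ∈ SPtrans δ Eo XS (x, false) e} =
      obsReach (avoid δ XS) Eo (X0 ∩ XSᶜ) (w ++ [e]) := by
  have hstep : ∀ x', (∃ x ∈ obsReach (avoid δ XS) Eo (X0 ∩ XSᶜ) w,
      (x', false) ∈ SPtrans δ Eo XS (x, false) e) ↔
        x' ∈ obsReach (avoid δ XS) Eo (X0 ∩ XSᶜ) (w ++ [e]) := by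
    intro x'
    rw [← obsReach_obsReach, ← oR_eq_obsReach_singleton]
    simp only [mem_SPtrans_false_iff, oR, Set.mem_ofPred_eq, Set.mem_singleton_iff,
      exists_eq_left]
    exact ⟨fun ⟨x, hx, _, h⟩ => ⟨x, hx, h⟩,
      fun ⟨x, hx, h⟩ => ⟨x, hx, obsReach_avoid_subset_compl w hx, h⟩⟩
  ext x'
  rw [Set.mem_sep_iff, hstep, oR_eq_obsReach_singleton, obsReach_obsReach]
  exact ⟨And.right, fun h => ⟨obsReach_avoid_subset _ h, h⟩⟩

theorem fv_obsReach (u w : List E) :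
    fv δ Eo XS (obsReach δ Eo X0 u, obsReach (avoid δ XS) Eo (X0 ∩ XSᶜ) u) w =
      (obsReach δ Eo X0 (u ++ w), obsReach (avoid δ XS) Eo (X0 ∩ XSᶜ) (u ++ w)) := by
  induction w generalizing u with
  | nil => simp [fv]
  | cons e w ih =>
    rw [fv, verifier_snd_step, oR_eq_obsReach_singleton, obsReach_obsReach, ih]
    simp

theorem fv_vInit (w : List E) :
    fv δ Eo XS (vInit δ Eo X0 XS) w =
      (obsReach δ Eo X0 w, obsReach (avoid δ XS) Eo (X0 ∩ XSᶜ) w) := by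
  rw [vInit_eq, fv_obsReach, List.nil_append]

theorem forall_mem_Xv_snd_ne_empty_iff :
    (∀ v ∈ Xv δ Eo X0 XS, v.2 ≠ ∅) ↔
      ∀ w : List E, (obsReach δ Eo X0 w).Nonempty →
        (obsReach (avoid δ XS) Eo (X0 ∩ XSᶜ) w).Nonempty := by
  simp only [Xv, fv_vInit, Set.mem_ofPred_eq, ← Set.nonempty_iff_ne_empty]
  constructor
  · exact fun h w hw => h _ ⟨w, rfl, hw⟩
  · rintro h v ⟨w, rfl, hw⟩
    exact h w hw

end Verifier

section StrongOpacity

variable {δ : X → E → Set X} {Eo : Set E} {X0 XS : Set X}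

theorem InfStepStrongOpaque.obsReach_avoid_nonempty (hG : InfStepStrongOpaque δ Eo X0 XS)
    {w : List E} (hw : (obsReach δ Eo X0 w).Nonempty) :
    (obsReach (avoid δ XS) Eo (X0 ∩ XSᶜ) w).Nonempty := by
  obtain ⟨x', x0, hx0, ω, rfl, hx'⟩ := hw
  rcases mem_dStr_avoid_or_exists_visit (S := XS) hx' with
    ⟨hx0S, hx'⟩ | ⟨s, t, rfl, m, ⟨hm, hmS⟩, hx'⟩
  · exact ⟨x', x0, ⟨hx0, hx0S⟩, ω, rfl, hx'⟩
  have hst : (dStr δ x0 (s ++ t)).Nonempty := ⟨x', mem_dStr_append.mpr ⟨m, hm, hx'⟩⟩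
  have hvisit : (dSet δ (dStr δ x0 s ∩ XS) t).Nonempty := by
    simp only [dSet, Set.nonempty_biUnion]
    exact ⟨m, ⟨hm, hmS⟩, x', hx'⟩
  obtain ⟨x0', hx0', ω', -, hω', hrun⟩ := hG x0 hx0 s t hst ⟨m, hm, hmS⟩ hvisit
  obtain ⟨-, x'', hx''⟩ := exists_isRun_forall_notMem_iff.mp hrun
  exact ⟨x'', x0', hx0', ω', hω', hx''⟩

theorem infStepStrongOpaque_of_obsReach_avoid_nonempty
    (h : ∀ w : List E, (obsReach δ Eo X0 w).Nonempty →
      (obsReach (avoid δ XS) Eo (X0 ∩ XSᶜ) w).Nonempty) :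
    InfStepStrongOpaque δ Eo X0 XS := by
  rintro x0 hx0 s t ⟨x', hx'⟩ - -
  obtain ⟨x'', x0', hx0', ω, hω, hx''⟩ := h (proj Eo (s ++ t)) ⟨x', x0, hx0, s ++ t, rfl, hx'⟩
  exact ⟨x0', hx0', ω, ⟨x'', dStr_mono avoid_subset x0' ω hx''⟩, hω,
    exists_isRun_forall_notMem_iff.mpr ⟨hx0'.2, x'', hx''⟩⟩

theorem infStepStrongOpaque_iff_obsReach_avoid_nonempty :
    InfStepStrongOpaque δ Eo X0 XS ↔
      ∀ w : List E, (obsReach δ Eo X0 w).Nonempty →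
        (obsReach (avoid δ XS) Eo (X0 ∩ XSᶜ) w).Nonempty :=
  ⟨fun hG _ => hG.obsReach_avoid_nonempty, infStepStrongOpaque_of_obsReach_avoid_nonempty⟩

end StrongOpacity

end Opacity

theorem infStepStrongOpaque_iff_verifier_states_nonempty_general
    {X E : Type*}
    (δ : X → E → Set X) (Eo : Set E) (X0 XS : Set X) :
    InfStepStrongOpaque δ Eo X0 XS ↔
      ∀ v ∈ Xv δ Eo X0 XS, v.2 ≠ ∅ :=
  infStepStrongOpaque_iff_obsReach_avoid_nonempty.trans forall_mem_Xv_snd_ne_empty_iff.symm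

/-- An NFA `G` is infinite-step strong opaque if and only if every
reachable verifier state `x_v = (x_v¹, x_v²)` satisfies `x_v² ≠ ∅`. -/
theorem infStepStrongOpaque_iff_verifier_states_nonempty
    {X E : Type*} [Finite X] [Finite E]
    (δ : X → E → Set X) (Eo : Set E) (X0 XS : Set X) :
    InfStepStrongOpaque δ Eo X0 XS ↔
      ∀ v ∈ Xv δ Eo X0 XS, v.2 ≠ ∅ :=
  infStepStrongOpaque_iff_verifier_states_nonempty_general δ Eo X0 XS
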